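/- For a smooth solution u of Plebański's second heavenly equation and any λ ∈ ℝ, the two first-order differential operators L₁ = ∂_t − (u_{xy} − λ) ∂_x + u_{xx} ∂_y and L₂ = ∂_z − u_{yy} ∂_x + (u_{xy} + λ) ∂_y commute: [L₁, L₂] = 0 as operators on smooth functions of (t,x,y,z). -/

import Mathlib

noncomputable def pd (i : Fin 4) (f : (Fin 4 → ℝ) → ℝ) (x : Fin 4 → ℝ) : ℝ :=
  deriv (fun s => f (Function.update x i s)) (x i)

lemma pd_eq {f : (Fin 4 → ℝ) → ℝ} {x : Fin 4 → ℝ} (hf : DifferentiableAt ℝ f x) (i : Fin 4) :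
    pd i f x = fderiv ℝ f x (Pi.single i 1) := by
  have h1 : HasDerivAt (fun z : ℝ => Function.update x i z) (Pi.single i 1) (x i) :=
    hasDerivAt_update x i (x i)
  have h2 : HasFDerivAt f (fderiv ℝ f x) (Function.update x i (x i)) := by
    rw [Function.update_eq_self]; exact hf.hasFDerivAt
  exact (h2.comp_hasDerivAt (x i) h1).deriv

@[fun_prop] lemma pd_contDiff {f : (Fin 4 → ℝ) → ℝ} (hf : ContDiff ℝ (⊤ : ℕ∞) f) (i : Fin 4) :
    ContDiff ℝ (⊤ : ℕ∞) (pd i f) := by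
  have : pd i f = fun x => fderiv ℝ f x (Pi.single i 1) :=
    funext fun x => pd_eq (hf.differentiable (by simp) x) i
  rw [this]
  exact (hf.fderiv_right (by simp)).clm_apply contDiff_const

lemma pd_comm {f : (Fin 4 → ℝ) → ℝ} (hf : ContDiff ℝ (⊤ : ℕ∞) f) (i j : Fin 4) :
    pd j (pd i f) = pd i (pd j f) := by
  funext x
  have hdf : ∀ y, HasFDerivAt f (fderiv ℝ f y) y := fun y =>
    (hf.differentiable (by simp) y).hasFDerivAt
  have hdf2 : HasFDerivAt (fun y => fderiv ℝ f y) (fderiv ℝ (fderiv ℝ f) x) x :=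
    (((hf.fderiv_right (m := (⊤ : ℕ∞)) (by simp)).differentiable (by simp)) x).hasFDerivAt
  have key : ∀ v w : Fin 4 → ℝ,
      fderiv ℝ (fderiv ℝ f) x v w = fderiv ℝ (fderiv ℝ f) x w v :=
    second_derivative_symmetric hdf hdf2
  have step : ∀ (a b : Fin 4),
      pd a (pd b f) x = fderiv ℝ (fderiv ℝ f) x (Pi.single a 1) (Pi.single b 1) := by
    intro a b
    have hpdb : pd b f = fun y => fderiv ℝ f y (Pi.single b 1) :=
      funext fun y => pd_eq (hf.differentiable (by simp) y) b
    have hcd : ContDiff ℝ (⊤ : ℕ∞) (pd b f) := pd_contDiff hf b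
    rw [pd_eq (hcd.differentiable (by simp) x) a, hpdb]
    have hL := (ContinuousLinearMap.apply ℝ ℝ (Pi.single b 1)).hasFDerivAt.comp x hdf2
    have hL' : HasFDerivAt (fun y => fderiv ℝ f y (Pi.single b 1))
        ((ContinuousLinearMap.apply ℝ ℝ (Pi.single b 1)).comp
          (fderiv ℝ (fderiv ℝ f) x)) x := hL
    rw [hL'.fderiv]; rfl
  rw [step j i, step i j, key]

lemma pd_const (i : Fin 4) (c : ℝ) (x : Fin 4 → ℝ) : pd i (fun _ => c) x = 0 := by
  simp [pd]

lemma pd_sub {f g : (Fin 4 → ℝ) → ℝ} (hf : ContDiff ℝ (⊤ : ℕ∞) f) (hg : ContDiff ℝ (⊤ : ℕ∞) g)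
    (i : Fin 4) (x : Fin 4 → ℝ) :
    pd i (fun y => f y - g y) x = pd i f x - pd i g x := by
  have hf' := hf.differentiable (by simp) x
  have hg' := hg.differentiable (by simp) x
  rw [pd_eq (hf'.fun_sub hg') i, pd_eq hf' i, pd_eq hg' i, fderiv_fun_sub hf' hg']; rfl

lemma pd_add {f g : (Fin 4 → ℝ) → ℝ} (hf : ContDiff ℝ (⊤ : ℕ∞) f) (hg : ContDiff ℝ (⊤ : ℕ∞) g)
    (i : Fin 4) (x : Fin 4 → ℝ) :
    pd i (fun y => f y + g y) x = pd i f x + pd i g x := by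
  have hf' := hf.differentiable (by simp) x
  have hg' := hg.differentiable (by simp) x
  rw [pd_eq (hf'.fun_add hg') i, pd_eq hf' i, pd_eq hg' i, fderiv_fun_add hf' hg']; rfl

lemma pd_mul {f g : (Fin 4 → ℝ) → ℝ} (hf : ContDiff ℝ (⊤ : ℕ∞) f) (hg : ContDiff ℝ (⊤ : ℕ∞) g)
    (i : Fin 4) (x : Fin 4 → ℝ) :
    pd i (fun y => f y * g y) x = pd i f x * g x + f x * pd i g x := by
  have hf' := hf.differentiable (by simp) x
  have hg' := hg.differentiable (by simp) x
  rw [pd_eq (hf'.fun_mul hg') i, pd_eq hf' i, pd_eq hg' i, fderiv_fun_mul hf' hg']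
  simp only [ContinuousLinearMap.add_apply, ContinuousLinearMap.smul_apply, smul_eq_mul]
  ring

lemma pd_pow2 {f : (Fin 4 → ℝ) → ℝ} (hf : ContDiff ℝ (⊤ : ℕ∞) f) (i : Fin 4) (x : Fin 4 → ℝ) :
    pd i (fun y => f y ^ 2) x = 2 * f x * pd i f x := by
  have : (fun y => f y ^ 2) = fun y => f y * f y := by funext y; ring
  rw [this, pd_mul hf hf]; ring

/-- `F = u_{xz} - u_{ty} - u_{xx} u_{yy} + u_{xy}^2` (coords: 0=t, 1=x, 2=y, 3=z). -/
noncomputable def heavenlyF (u : (Fin 4 → ℝ) → ℝ) (x : Fin 4 → ℝ) : ℝ :=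
  pd 1 (pd 3 u) x - pd 0 (pd 2 u) x
    - pd 1 (pd 1 u) x * pd 2 (pd 2 u) x + (pd 1 (pd 2 u) x) ^ 2

/-- Lax operator `L₁ = ∂_t - (u_{xy} - λ) ∂_x + u_{xx} ∂_y`. -/
noncomputable def laxL1 (u : (Fin 4 → ℝ) → ℝ) (lam : ℝ) (f : (Fin 4 → ℝ) → ℝ)
    (x : Fin 4 → ℝ) : ℝ :=
  pd 0 f x - (pd 1 (pd 2 u) x - lam) * pd 1 f x + pd 1 (pd 1 u) x * pd 2 f x

/-- Lax operator `L₂ = ∂_z - u_{yy} ∂_x + (u_{xy} + λ) ∂_y`. -/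
noncomputable def laxL2 (u : (Fin 4 → ℝ) → ℝ) (lam : ℝ) (f : (Fin 4 → ℝ) → ℝ)
    (x : Fin 4 → ℝ) : ℝ :=
  pd 3 f x - pd 2 (pd 2 u) x * pd 1 f x + (pd 1 (pd 2 u) x + lam) * pd 2 f x

theorem stmt1 (u : (Fin 4 → ℝ) → ℝ) (lam : ℝ) (hu : ContDiff ℝ (⊤ : ℕ∞) u)
    (hheav : ∀ x, heavenlyF u x = 0) :
    ∀ q : (Fin 4 → ℝ) → ℝ, ContDiff ℝ (⊤ : ℕ∞) q → ∀ x,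
      laxL1 u lam (laxL2 u lam q) x - laxL2 u lam (laxL1 u lam q) x = 0 := by
  intro q hq x
  have h1 : pd 1 (fun y => pd 1 (pd 3 u) y - pd 0 (pd 2 u) y
      - pd 1 (pd 1 u) y * pd 2 (pd 2 u) y + (pd 1 (pd 2 u) y) ^ 2) x = 0 := by
    rw [show (fun y => pd 1 (pd 3 u) y - pd 0 (pd 2 u) y
      - pd 1 (pd 1 u) y * pd 2 (pd 2 u) y + (pd 1 (pd 2 u) y) ^ 2) = (fun _ => (0:ℝ))
      from funext hheav]
    exact pd_const _ _ _
  have h2 : pd 2 (fun y => pd 1 (pd 3 u) y - pd 0 (pd 2 u) y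
      - pd 1 (pd 1 u) y * pd 2 (pd 2 u) y + (pd 1 (pd 2 u) y) ^ 2) x = 0 := by
    rw [show (fun y => pd 1 (pd 3 u) y - pd 0 (pd 2 u) y
      - pd 1 (pd 1 u) y * pd 2 (pd 2 u) y + (pd 1 (pd 2 u) y) ^ 2) = (fun _ => (0:ℝ))
      from funext hheav]
    exact pd_const _ _ _
  have hL2 : laxL2 u lam q = fun y => pd 3 q y - pd 2 (pd 2 u) y * pd 1 q y
      + (pd 1 (pd 2 u) y + lam) * pd 2 q y := rfl
  have hL1 : laxL1 u lam q = fun y => pd 0 q y - (pd 1 (pd 2 u) y - lam) * pd 1 q y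
      + pd 1 (pd 1 u) y * pd 2 q y := rfl
  simp only [laxL1, laxL2, hL1, hL2]
  simp (disch := fun_prop) only [pd_add, pd_sub, pd_mul, pd_pow2, pd_const] at h1 h2 ⊢
  have Su := pd_comm hu
  have S1 := pd_comm (pd_contDiff hu 1)
  have S2 := pd_comm (pd_contDiff hu 2)
  have S3 := pd_comm (pd_contDiff hu 3)
  have Sq := pd_comm hq
  simp only [Su 0 1, Su 0 2, Su 0 3, Su 1 2, Su 1 3, Su 2 3,
    S1 0 1, S1 0 2, S1 0 3, S1 1 2, S1 1 3, S1 2 3,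
    S2 0 1, S2 0 2, S2 0 3, S2 1 2, S2 1 3, S2 2 3,
    S3 0 1, S3 0 2, S3 0 3, S3 1 2, S3 1 3, S3 2 3,
    Sq 0 1, Sq 0 2, Sq 0 3, Sq 1 2, Sq 1 3, Sq 2 3] at h1 h2 ⊢
  linear_combination pd 1 q x * h2 - pd 2 q x * h1
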